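/- Let N ≥ 1 and let ρ be a complex matrix indexed by (Fin N → Fin 2). Define the N-qubit coherent state v(Ω) : (Fin N → Fin 2) → ℂ by v(Ω)(b) = ∏_{i} ( cos(θ_i/2) if b(i)=0, e^{iφ_i} sin(θ_i/2) if b(i)=1 ), and the many-body Q function Q_ρ(Ω) = (1/(2π))^N · ⟨v(Ω)| ρ |v(Ω)⟩. Then Q_ρ(Ω) = (1/(4π))^N · Σ_{P : Fin N → Fin 4} Tr[ ρ · ⊗_{i} σ_{P(i)} ] · ∏_{i} Y_{P(i)}(θ_i,φ_i), where σ₀ = I₂, σ₁ = σx, σ₂ = σy, σ₃ = σz, and Y₀(θ,φ)=1, Y₁(θ,φ)=sinθcosφ, Y₂(θ,φ)=sinθsinφ, Y₃(θ,φ)=cosθ, and ⊗_i σ_{P(i)} is the matrix indexed by (Fin N → Fin 2) with entries ∏_i σ_{P(i)}(b(i), b'(i)). -/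
import Mathlib


open Matrix Complex Real MeasureTheory

noncomputable section

def σx : Matrix (Fin 2) (Fin 2) ℂ := !![0, 1; 1, 0]
def σy : Matrix (Fin 2) (Fin 2) ℂ := !![0, -Complex.I; Complex.I, 0]
def σz : Matrix (Fin 2) (Fin 2) ℂ := !![1, 0; 0, -1]

/-- σ₀ = I₂, σ₁ = σx, σ₂ = σy, σ₃ = σz. -/
def pauli4 : Fin 4 → Matrix (Fin 2) (Fin 2) ℂ := ![1, σx, σy, σz]

/-- Y₀ = 1, Y₁ = sinθcosφ, Y₂ = sinθsinφ, Y₃ = cosθ. -/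
def Y4 : Fin 4 → ℝ → ℝ → ℝ :=
  ![fun _ _ => 1,
    fun θ φ => Real.sin θ * Real.cos φ,
    fun θ φ => Real.sin θ * Real.sin φ,
    fun θ _ => Real.cos θ]

/-- The N-qubit coherent state v(Ω). -/
def cohVecN (N : ℕ) (θ φ : Fin N → ℝ) : (Fin N → Fin 2) → ℂ :=
  fun b => ∏ i, (if b i = 0 then ((Real.cos (θ i / 2) : ℝ) : ℂ)
    else Complex.exp (Complex.I * (φ i : ℂ)) * ((Real.sin (θ i / 2) : ℝ) : ℂ))

/-- The many-body Q function Q_ρ(Ω) = (1/(2π))^N ⟨v(Ω)|ρ|v(Ω)⟩. -/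
def QfunN (N : ℕ) (ρ : Matrix (Fin N → Fin 2) (Fin N → Fin 2) ℂ)
    (θ φ : Fin N → ℝ) : ℂ :=
  (1 / (2 * Real.pi) : ℂ) ^ N *
    ∑ b, ∑ b', (starRingEnd ℂ) (cohVecN N θ φ b) * ρ b b' * cohVecN N θ φ b'

lemma sum_comm3 {A B C M : Type*} [Fintype A] [Fintype B] [Fintype C] [AddCommMonoid M]
    (f : A → B → C → M) :
    ∑ a, ∑ b, ∑ c, f a b c = ∑ c, ∑ a, ∑ b, f a b c :=
  calc ∑ a, ∑ b, ∑ c, f a b c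
      = ∑ a, ∑ c, ∑ b, f a b c := Finset.sum_congr rfl fun a _ => Finset.sum_comm
    _ = ∑ c, ∑ a, ∑ b, f a b c := Finset.sum_comm

lemma site (θ φ : ℝ) (b b' : Fin 2) :
    (starRingEnd ℂ) (if b = 0 then ((Real.cos (θ/2):ℝ):ℂ)
      else Complex.exp (Complex.I * (φ:ℂ)) * ((Real.sin (θ/2):ℝ):ℂ)) *
    (if b' = 0 then ((Real.cos (θ/2):ℝ):ℂ)
      else Complex.exp (Complex.I * (φ:ℂ)) * ((Real.sin (θ/2):ℝ):ℂ))
    = (1/2 : ℂ) * ∑ p : Fin 4, pauli4 p b' b * ((Y4 p θ φ : ℝ) : ℂ) := by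
  have hc : Real.cos θ = 2 * Real.cos (θ/2)^2 - 1 := by
    have h := Real.cos_sq (θ/2); rw [show 2*(θ/2) = θ by ring] at h; linarith
  have hs : Real.sin θ = 2 * Real.sin (θ/2) * Real.cos (θ/2) := by
    have h := Real.sin_two_mul (θ/2); rw [show 2*(θ/2) = θ by ring] at h; linarith
  have hsc : Real.sin (θ/2)^2 + Real.cos (θ/2)^2 = 1 := Real.sin_sq_add_cos_sq _
  rw [show Complex.I * (φ:ℂ) = (φ:ℂ) * Complex.I from mul_comm _ _, Complex.exp_mul_I]
  fin_cases b <;> fin_cases b' <;>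
    simp [pauli4, Y4, σx, σy, σz, Fin.sum_univ_four, Matrix.one_apply, hc, hs,
      Complex.ext_iff, ← Complex.ofReal_cos, ← Complex.ofReal_sin, ← Complex.ofReal_pow] <;>
    (try constructor) <;> nlinarith [Real.sin_sq_add_cos_sq φ]


/-- Many-body Pauli expectation expansion of the Q function. -/
theorem many_body_q_function_pauli_expansion (N : ℕ) (hN : 1 ≤ N)
    (ρ : Matrix (Fin N → Fin 2) (Fin N → Fin 2) ℂ) (θ φ : Fin N → ℝ) :
    QfunN N ρ θ φ =
      (1 / (4 * Real.pi) : ℂ) ^ N *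
        ∑ P : Fin N → Fin 4,
          Matrix.trace (ρ * Matrix.of (fun b b' => ∏ i, pauli4 (P i) (b i) (b' i)))
            * ∏ i, ((Y4 (P i) (θ i) (φ i) : ℝ) : ℂ) := by
  have key : ∀ b b' : Fin N → Fin 2,
      (starRingEnd ℂ) (cohVecN N θ φ b) * cohVecN N θ φ b'
      = (1/2:ℂ)^N * ∑ P : Fin N → Fin 4,
          ∏ i, (pauli4 (P i) (b' i) (b i) * ((Y4 (P i) (θ i) (φ i):ℝ):ℂ)) := by
    intro b b'
    unfold cohVecN
    rw [map_prod, ← Finset.prod_mul_distrib]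
    have h1 : ∀ i ∈ Finset.univ, (starRingEnd ℂ)
        (if b i = 0 then ((Real.cos (θ i / 2):ℝ):ℂ)
          else Complex.exp (Complex.I * (φ i:ℂ)) * ((Real.sin (θ i / 2):ℝ):ℂ)) *
        (if b' i = 0 then ((Real.cos (θ i / 2):ℝ):ℂ)
          else Complex.exp (Complex.I * (φ i:ℂ)) * ((Real.sin (θ i / 2):ℝ):ℂ))
        = (1/2:ℂ) * ∑ p : Fin 4, pauli4 p (b' i) (b i) * ((Y4 p (θ i) (φ i):ℝ):ℂ) :=
      fun i _ => site (θ i) (φ i) (b i) (b' i)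
    rw [Finset.prod_congr rfl h1, Finset.prod_mul_distrib, Finset.prod_const,
      Finset.card_univ, Fintype.card_fin, Finset.prod_univ_sum]
    congr 1
  -- expand trace
  have htr : ∀ P : Fin N → Fin 4,
      Matrix.trace (ρ * Matrix.of (fun b b' => ∏ i, pauli4 (P i) (b i) (b' i)))
      = ∑ b, ∑ b', ρ b b' * ∏ i, pauli4 (P i) (b' i) (b i) := by
    intro P
    simp [Matrix.trace, Matrix.diag, Matrix.mul_apply]
  unfold QfunN
  have hmc : ∀ b b' : Fin N → Fin 2,
      (starRingEnd ℂ) (cohVecN N θ φ b) * ρ b b' * cohVecN N θ φ b'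
      = ρ b b' * ((starRingEnd ℂ) (cohVecN N θ φ b) * cohVecN N θ φ b') := fun _ _ => by ring
  simp_rw [hmc, key, htr]
  trans ((1/(2*Real.pi):ℂ))^N * ((1/2:ℂ)^N *
    ∑ b, ∑ b', ∑ P : Fin N → Fin 4,
      ρ b b' * ∏ i, (pauli4 (P i) (b' i) (b i) * ((Y4 (P i) (θ i) (φ i):ℝ):ℂ)))
  · congr 1
    simp only [Finset.mul_sum]
    exact Finset.sum_congr rfl fun _ _ => Finset.sum_congr rfl fun _ _ =>
      Finset.sum_congr rfl fun _ _ => by ring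
  · rw [← mul_assoc, ← mul_pow]
    have hconst : ((1:ℂ) / (2 * Real.pi)) * (1/2) = 1 / (4 * Real.pi) := by
      rw [div_mul_div_comm]; norm_num; ring_nf
    rw [hconst]
    congr 1
    have hinner : ∀ (P : Fin N → Fin 4) (b b' : Fin N → Fin 2),
        (ρ b b' * ∏ i, pauli4 (P i) (b' i) (b i)) * ∏ i, ((Y4 (P i) (θ i) (φ i):ℝ):ℂ)
        = ρ b b' * ∏ i, (pauli4 (P i) (b' i) (b i) * ((Y4 (P i) (θ i) (φ i):ℝ):ℂ)) := by
      intro P b b'; rw [Finset.prod_mul_distrib]; ring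
    conv_rhs => simp only [Finset.sum_mul]
    simp_rw [hinner]
    exact sum_comm3 _
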